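/- arXiv:1702.02131 — 2 statements merged into one kernel-verified Lean document; each statement's English description precedes it below -/
import Mathlib

section
/- If A is a nonsingular 3×3 real matrix with ‖A‖² = 3 and det A = 0 is false, and B is a matrix on the sphere ‖B‖² = 3 of rank 1 that minimizes ‖A - B‖ among singular matrices on this sphere, then a contradiction arises; i.e., the closest singular matrix on the sphere {‖M‖² = 3, det M = 0} to a nonsingular matrix A on the sphere has rank exactly 2. -/
/-!
A singular `B` has rank at most 2, so it suffices to rule out rank at most 1. Then `ker B` has
dimension at least 2: take `y ≠ 0` in it and `z ≠ 0` in `ker B ∩ y⊥`. The rank-one matrix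
`N = (A y) yᵀ` is Frobenius-orthogonal to `B` with `⟪A, N⟫ = ‖A y‖² > 0`, so the circle of radius
`‖B‖` in `span {B, N}` contains an `M` with `⟪A, M⟫ > ⟪A, B⟫`, i.e. strictly closer to `A`; and
`M z = 0`, so `M` is singular.
-/

open Matrix

/-- The squared Frobenius norm of a matrix. -/
def frobSq {m n : Type*} [Fintype m] [Fintype n] (A : Matrix m n ℝ) : ℝ :=
  ∑ i, ∑ j, (A i j) ^ 2

def frobInner {m n : Type*} [Fintype m] [Fintype n] (X Y : Matrix m n ℝ) : ℝ :=
  ∑ i, ∑ j, X i j * Y i j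

section Frobenius

variable {m n : Type*} [Fintype m] [Fintype n]

lemma frobSq_eq_zero_iff {X : Matrix m n ℝ} : frobSq X = 0 ↔ X = 0 := by
  rw [frobSq, Finset.sum_eq_zero_iff_of_nonneg fun i _ =>
    Finset.sum_nonneg fun j _ => sq_nonneg (X i j)]
  simp_rw [Finset.sum_eq_zero_iff_of_nonneg fun _ _ => sq_nonneg _]
  simp [← Matrix.ext_iff]

lemma frobSq_pos {X : Matrix m n ℝ} (hX : X ≠ 0) : 0 < frobSq X :=
  lt_of_le_of_ne (by unfold frobSq; positivity) (Ne.symm (frobSq_eq_zero_iff.not.mpr hX))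

lemma frobSq_sub (X Y : Matrix m n ℝ) :
    frobSq (X - Y) = frobSq X + frobSq Y - 2 * frobInner X Y := by
  simp only [frobSq, frobInner, Finset.mul_sum, ← Finset.sum_add_distrib, ← Finset.sum_sub_distrib]
  refine Finset.sum_congr rfl fun i _ => Finset.sum_congr rfl fun j _ => ?_
  rw [Matrix.sub_apply]
  ring

lemma frobSq_smul_add_smul (s t : ℝ) (X Y : Matrix m n ℝ) :
    frobSq (s • X + t • Y) = s ^ 2 * frobSq X + 2 * s * t * frobInner X Y + t ^ 2 * frobSq Y := by
  simp only [frobSq, frobInner, Finset.mul_sum, ← Finset.sum_add_distrib]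
  refine Finset.sum_congr rfl fun i _ => Finset.sum_congr rfl fun j _ => ?_
  rw [Matrix.add_apply, Matrix.smul_apply, Matrix.smul_apply, smul_eq_mul, smul_eq_mul]
  ring

lemma frobInner_smul_add_smul (s t : ℝ) (A X Y : Matrix m n ℝ) :
    frobInner A (s • X + t • Y) = s * frobInner A X + t * frobInner A Y := by
  simp only [frobInner, Finset.mul_sum, ← Finset.sum_add_distrib]
  refine Finset.sum_congr rfl fun i _ => Finset.sum_congr rfl fun j _ => ?_
  rw [Matrix.add_apply, Matrix.smul_apply, Matrix.smul_apply, smul_eq_mul, smul_eq_mul]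
  ring

lemma frobInner_vecMulVec (X : Matrix m n ℝ) (w : m → ℝ) (y : n → ℝ) :
    frobInner X (vecMulVec w y) = w ⬝ᵥ (X *ᵥ y) := by
  simp only [frobInner, dotProduct, mulVec, Finset.mul_sum]
  refine Finset.sum_congr rfl fun i _ => Finset.sum_congr rfl fun j _ => ?_
  rw [vecMulVec_apply]
  ring

lemma exists_frobInner_gt_of_frobInner_eq_zero {A B N : Matrix m n ℝ} (hB : B ≠ 0)
    (hBN : frobInner B N = 0) (hAN : 0 < frobInner A N) :
    ∃ s t : ℝ, frobSq (s • B + t • N) = frobSq B ∧ frobInner A B < frobInner A (s • B + t • N) := by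
  have hN : N ≠ 0 := by
    rintro rfl
    simp [frobInner] at hAN
  set b := frobInner A B
  set c := frobInner A N
  have hq : 0 < frobSq B := frobSq_pos hB
  obtain ⟨u, hu, hu2⟩ : ∃ u : ℝ, 0 < u ∧ u ^ 2 = frobSq N :=
    ⟨√(frobSq N), Real.sqrt_pos.mpr (frobSq_pos hN), Real.sq_sqrt (frobSq_pos hN).le⟩
  obtain ⟨r, hr, hr2⟩ : ∃ r : ℝ, 0 < r ∧ r ^ 2 = b ^ 2 * u ^ 2 + c ^ 2 * frobSq B :=
    ⟨√(b ^ 2 * u ^ 2 + c ^ 2 * frobSq B), Real.sqrt_pos.mpr (by positivity),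
      Real.sq_sqrt (by positivity)⟩
  -- the maximiser of `⟪A, s • B + t • N⟫` on the ellipse `s² ‖B‖² + t² ‖N‖² = ‖B‖²`
  refine ⟨b * u / r, c * frobSq B / (u * r), ?_, ?_⟩
  · rw [frobSq_smul_add_smul, hBN, ← hu2]
    field_simp
    linear_combination -hr2
  · have hval : b * u / r * b + c * frobSq B / (u * r) * c = r / u := by
      field_simp
      linear_combination -hr2
    have hbr : b * u < r :=
      lt_of_pow_lt_pow_left₀ 2 hr.le (by rw [hr2]; nlinarith [mul_pos (mul_pos hAN hAN) hq])
    rw [frobInner_smul_add_smul, hval, lt_div_iff₀ hu]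
    exact hbr

end Frobenius

section Kernel

variable {K n : Type*} [Field K] [Fintype n]

lemma rank_add_finrank_ker_mulVecLin {m : Type*} (B : Matrix m n K) :
    B.rank + Module.finrank K (LinearMap.ker B.mulVecLin) = Fintype.card n := by
  rw [Matrix.rank, LinearMap.finrank_range_add_finrank_ker, Module.finrank_fintype_fun_eq_card]

lemma rank_lt_card_of_det_eq_zero [DecidableEq n] {B : Matrix n n K} (hB : B.det = 0) :
    B.rank < Fintype.card n := by
  obtain ⟨v, hv, hBv⟩ := exists_mulVec_eq_zero_iff.mpr hB
  have : 1 ≤ Module.finrank K (LinearMap.ker B.mulVecLin) :=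
    Submodule.one_le_finrank_iff.mpr ((Submodule.ne_bot_iff _).mpr ⟨v, hBv, hv⟩)
  have := rank_add_finrank_ker_mulVecLin B
  omega

lemma Submodule.exists_mem_ne_zero_dotProduct_eq_zero {W : Submodule K (n → K)}
    (hW : 2 ≤ Module.finrank K W) (y : n → K) : ∃ z ∈ W, z ≠ 0 ∧ y ⬝ᵥ z = 0 := by
  let f : W →ₗ[K] K := dotProductBilin K K y ∘ₗ W.subtype
  have hrange : Module.finrank K (LinearMap.range f) ≤ 1 :=
    (Submodule.finrank_le _).trans (Module.finrank_self K).le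
  have hker : 1 ≤ Module.finrank K (LinearMap.ker f) := by
    have := f.finrank_range_add_finrank_ker
    omega
  obtain ⟨⟨z, hzW⟩, hfz, hz⟩ :=
    Submodule.exists_mem_ne_zero_of_ne_bot (Submodule.one_le_finrank_iff.mp hker)
  exact ⟨z, hzW, by simpa using hz, hfz⟩

end Kernel

theorem exists_det_eq_zero_frobSq_sub_lt {n : Type*} [Fintype n] [DecidableEq n]
    {A B : Matrix n n ℝ} (hA : A.det ≠ 0) (hB : B ≠ 0) (hrank : B.rank + 2 ≤ Fintype.card n) :
    ∃ M, frobSq M = frobSq B ∧ M.det = 0 ∧ frobSq (A - M) < frobSq (A - B) := by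
  have hker : 2 ≤ Module.finrank ℝ (LinearMap.ker B.mulVecLin) := by
    have := rank_add_finrank_ker_mulVecLin B
    omega
  obtain ⟨y, hyB, hy, -⟩ := Submodule.exists_mem_ne_zero_dotProduct_eq_zero hker 0
  obtain ⟨z, hzB, hz, hyz⟩ := Submodule.exists_mem_ne_zero_dotProduct_eq_zero hker y
  rw [LinearMap.mem_ker, mulVecLin_apply] at hyB hzB
  have hAy : A *ᵥ y ≠ 0 := fun h => hA (exists_mulVec_eq_zero_iff.mp ⟨y, hy, h⟩)
  set N := vecMulVec (A *ᵥ y) y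
  have hBN : frobInner B N = 0 := by simp [N, frobInner_vecMulVec, hyB]
  have hAN : 0 < frobInner A N := by
    simpa [N, frobInner_vecMulVec] using dotProduct_self_star_pos_iff.mpr hAy
  obtain ⟨s, t, hM, hlt⟩ := exists_frobInner_gt_of_frobInner_eq_zero hB hBN hAN
  refine ⟨s • B + t • N, hM, exists_mulVec_eq_zero_iff.mp ⟨z, hz, ?_⟩, ?_⟩
  · simp [add_mulVec, smul_mulVec, hzB, N, vecMulVec_mulVec, hyz]
  · rw [frobSq_sub, frobSq_sub, hM]
    linarith

theorem nearest_singular_has_rank_two_general (A B : Matrix (Fin 3) (Fin 3) ℝ)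
    (hAdet : A.det ≠ 0)
    (hB : frobSq B = 3) (hBdet : B.det = 0)
    (hmin : ∀ M : Matrix (Fin 3) (Fin 3) ℝ, frobSq M = 3 → M.det = 0 →
      frobSq (A - B) ≤ frobSq (A - M)) :
    B.rank = 2 := by
  have hB0 : B ≠ 0 := by
    rintro rfl
    simp [frobSq] at hB
  have hle : B.rank < 3 := by simpa using rank_lt_card_of_det_eq_zero hBdet
  by_contra hne
  obtain ⟨M, hM, hMdet, hlt⟩ :=
    exists_det_eq_zero_frobSq_sub_lt hAdet hB0 (by simp only [Fintype.card_fin]; omega)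
  exact (hmin M (hM.trans hB) hMdet).not_gt hlt

/-- If A is a nonsingular 3×3 real matrix with ‖A‖² = 3 (Frobenius), and B is a singular
matrix on the sphere ‖B‖² = 3 minimizing the Frobenius distance to A among all singular
matrices on that sphere, then B has rank exactly 2. -/
theorem nearest_singular_has_rank_two (A B : Matrix (Fin 3) (Fin 3) ℝ)
    (hA : frobSq A = 3) (hAdet : A.det ≠ 0)
    (hB : frobSq B = 3) (hBdet : B.det = 0)
    (hmin : ∀ M : Matrix (Fin 3) (Fin 3) ℝ, frobSq M = 3 → M.det = 0 →
      frobSq (A - B) ≤ frobSq (A - M)) :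
    B.rank = 2 :=
  nearest_singular_has_rank_two_general A B hAdet hB hBdet hmin
end

section
/- Eckart–Young theorem (spectral norm/Frobenius case, Frobenius norm version): Let A be an n×k real matrix with SVD A = W D V⁻¹, D = diag(d₁ ≥ d₂ ≥ ... ≥ d_r > 0, 0, ..., 0), and let r' < r. Then A' = W D' V⁻¹ with D' = diag(d₁,...,d_{r'},0,...,0) satisfies ‖A - A'‖ ≤ ‖A - B‖ in Frobenius norm for every n×k matrix B of rank at most r'. -/
/-!
Orthogonal invariance of the Frobenius norm reduces the theorem to the rectangular diagonal
matrix `D`. If `rank C ≤ r`, the kernel of `C` contains an orthonormal family `v₁, …, v_s` with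
`s ≥ k - r`, and Bessel's inequality applied to each row gives
`‖D - C‖² ≥ ∑ⱼ ‖(D - C) vⱼ‖² = ∑ⱼ ‖D vⱼ‖² = ∑ₗ dₗ² tₗ`, where the weights `tₗ = ∑ⱼ vⱼ(l)²` lie in
`[0, 1]` and add up to `s`. As the `dₗ²` decrease, such a weighted sum is at least the sum of the
last `k - r` of them, which is `‖D - D'‖²`.
-/

open Matrix

open Finset

lemma sum_le_sum_mul_of_threshold {ι : Type*} [Fintype ι] (S : Finset ι) {c t : ι → ℝ} {γ : ℝ}
    (hγ : 0 ≤ γ) (hS : ∀ i ∈ S, c i ≤ γ) (hSc : ∀ i ∉ S, γ ≤ c i) (ht0 : ∀ i, 0 ≤ t i)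
    (ht1 : ∀ i, t i ≤ 1) (hcard : (#S : ℝ) ≤ ∑ i, t i) :
    ∑ i ∈ S, c i ≤ ∑ i, c i * t i := by
  classical
  have hpoint : ∀ i, γ * (t i - if i ∈ S then 1 else 0) ≤ c i * t i - if i ∈ S then c i else 0 := by
    intro i
    by_cases hi : i ∈ S
    · simp only [if_pos hi]
      nlinarith [hS i hi, ht1 i]
    · simp only [if_neg hi, sub_zero]
      nlinarith [hSc i hi, ht0 i]
  have hsum := Finset.sum_le_sum fun i (_ : i ∈ univ) => hpoint i
  simp only [← mul_sum, sum_sub_distrib, sum_ite_mem, univ_inter, sum_const, nsmul_eq_mul,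
    mul_one] at hsum
  nlinarith

section Frobenius

variable {m n : Type*} [Fintype m] [Fintype n]

lemma frobSq_eq_trace (M : Matrix m n ℝ) : frobSq M = (Mᵀ * M).trace := by
  simp only [frobSq, trace, Matrix.diag, mul_apply, transpose_apply, pow_two]
  exact sum_comm

lemma frobSq_mul_mul_transpose [DecidableEq m] [DecidableEq n] {W : Matrix m m ℝ}
    {V : Matrix n n ℝ} (hW : Wᵀ * W = 1) (hV : Vᵀ * V = 1) (M : Matrix m n ℝ) :
    frobSq (W * M * Vᵀ) = frobSq M := by
  have hgram : (W * M * Vᵀ)ᵀ * (W * M * Vᵀ) = V * (Mᵀ * M) * Vᵀ := by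
    simp only [transpose_mul, transpose_transpose, Matrix.mul_assoc]
    rw [← Matrix.mul_assoc Wᵀ, hW, Matrix.one_mul]
  rw [frobSq_eq_trace, frobSq_eq_trace, hgram, trace_mul_cycle, hV, Matrix.one_mul]

lemma sum_sq_mulVec (M : Matrix m n ℝ) (x : n → ℝ) :
    ∑ i, (M *ᵥ x) i ^ 2 = x ⬝ᵥ (Mᵀ * M) *ᵥ x := by
  rw [← mulVec_mulVec, dotProduct_mulVec, vecMul_transpose]
  simp only [dotProduct, pow_two]

lemma sum_sum_sq_mulVec_le_frobSq (M : Matrix m n ℝ) {ι : Type*} [Fintype ι]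
    {v : ι → EuclideanSpace ℝ n} (hv : Orthonormal ℝ v) :
    ∑ j, ∑ i, (M *ᵥ v j) i ^ 2 ≤ frobSq M := by
  rw [sum_comm]
  refine sum_le_sum fun i _ => ?_
  have hrow := hv.sum_inner_products_le (s := univ) (WithLp.toLp 2 (M i))
  rw [EuclideanSpace.norm_sq_eq] at hrow
  simpa [PiLp.inner_apply, mulVec, dotProduct, mul_comm] using hrow

end Frobenius

lemma Matrix.exists_orthonormal_mulVec_eq_zero {m n : Type*} [Fintype n] (C : Matrix m n ℝ) :
    ∃ (s : ℕ) (v : Fin s → EuclideanSpace ℝ n), Orthonormal ℝ v ∧ (∀ j, C *ᵥ v j = 0) ∧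
      Fintype.card n = s + C.rank := by
  set f := C.mulVecLin ∘ₗ (WithLp.linearEquiv 2 ℝ (n → ℝ)).toLinearMap
  have hrank : C.rank = Module.finrank ℝ (LinearMap.range f) := by
    rw [LinearMap.range_comp_of_range_eq_top _ (LinearEquiv.range _)]
    rfl
  refine ⟨_, _, (stdOrthonormalBasis ℝ (LinearMap.ker f)).orthonormal.comp_linearIsometry
    (LinearMap.ker f).subtypeₗᵢ, fun j => (stdOrthonormalBasis ℝ _ j).2, ?_⟩
  have hnullity := f.finrank_range_add_finrank_ker
  rw [finrank_euclideanSpace] at hnullity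
  omega

section Orthonormal

variable {n : Type*} [Fintype n] {s : ℕ} {v : Fin s → EuclideanSpace ℝ n}

lemma Orthonormal.sum_sq_apply_le_one (hv : Orthonormal ℝ v) (l : n) : ∑ j, v j l ^ 2 ≤ 1 := by
  classical
  simpa [EuclideanSpace.inner_single_right] using
    hv.sum_inner_products_le (s := univ) (EuclideanSpace.single l (1 : ℝ))

lemma Orthonormal.sum_sum_sq_apply (hv : Orthonormal ℝ v) : ∑ l, ∑ j, v j l ^ 2 = s := by
  have hnorm : ∀ j, ∑ l, v j l ^ 2 = 1 := fun j => by
    rw [← EuclideanSpace.real_norm_sq_eq, hv.1 j, one_pow]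
  rw [sum_comm]
  simp [hnorm]

end Orthonormal

def rectDiag {R : Type*} [Zero R] (n k : ℕ) (e : ℕ → R) : Matrix (Fin n) (Fin k) R :=
  of fun i j => if (i : ℕ) = j then e i else 0

section RectDiag

variable {n k : ℕ}

lemma rectDiag_transpose_mul_self {R : Type*} [CommSemiring R] {e : ℕ → R}
    (he : ∀ i, n ≤ i → e i = 0) :
    (rectDiag n k e)ᵀ * rectDiag n k e = diagonal fun l : Fin k => e l ^ 2 := by
  ext l l'
  simp only [mul_apply, transpose_apply, rectDiag, of_apply, diagonal_apply]
  by_cases h : l = l'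
  · subst h
    have hsq : ∀ i : Fin n, ((if (i : ℕ) = l then e i else 0) * if (i : ℕ) = l then e i else 0) =
        if (i : ℕ) = l then e i ^ 2 else 0 := fun i => by split_ifs <;> ring
    simp only [hsq, if_true]
    rw [Fin.sum_univ_eq_sum_range (fun i => if i = l then e i ^ 2 else 0), sum_ite_eq']
    split_ifs with hl
    · rfl
    · rw [he l (by simpa using hl), zero_pow two_ne_zero]
  · rw [if_neg h]
    exact sum_eq_zero fun i _ => by grind

variable {e : ℕ → ℝ}

lemma frobSq_rectDiag (he : ∀ i, n ≤ i → e i = 0) :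
    frobSq (rectDiag n k e) = ∑ l : Fin k, e l ^ 2 := by
  rw [frobSq_eq_trace, rectDiag_transpose_mul_self he, trace_diagonal]

lemma sum_sq_rectDiag_mulVec (he : ∀ i, n ≤ i → e i = 0) (x : Fin k → ℝ) :
    ∑ i, (rectDiag n k e *ᵥ x) i ^ 2 = ∑ l : Fin k, e l ^ 2 * x l ^ 2 := by
  rw [sum_sq_mulVec, rectDiag_transpose_mul_self he]
  simp only [dotProduct, mulVec_diagonal]
  exact sum_congr rfl fun l _ => by ring

lemma frobSq_rectDiag_sub_truncate {d : ℕ → ℝ} (hdn : ∀ i, n ≤ i → d i = 0) (r : ℕ) :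
    frobSq (rectDiag n k d - rectDiag n k fun i => if i < r then d i else 0) =
      ∑ l : Fin k with r ≤ l.val, d l ^ 2 := by
  have htail : rectDiag n k d - (rectDiag n k fun i => if i < r then d i else 0) =
      rectDiag n k fun i => if r ≤ i then d i else 0 := by
    ext i j
    simp only [Matrix.sub_apply, rectDiag, of_apply]
    split_ifs <;> grind
  rw [htail, frobSq_rectDiag fun i hi => by simp [hdn i hi], sum_filter]
  simp

lemma sum_tail_sq_le_frobSq_rectDiag_sub {d : ℕ → ℝ} (hd : Antitone d) (hd0 : ∀ i, 0 ≤ d i)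
    (hdn : ∀ i, n ≤ i → d i = 0) {r : ℕ} {C : Matrix (Fin n) (Fin k) ℝ} (hC : C.rank ≤ r) :
    ∑ l : Fin k with r ≤ l.val, d l ^ 2 ≤ frobSq (rectDiag n k d - C) := by
  obtain ⟨s, v, hv, hCv, hdim⟩ := C.exists_orthonormal_mulVec_eq_zero
  have hcard : #{l : Fin k | r ≤ l.val} ≤ s := by
    have hsplit := card_filter_add_card_filter_not (s := univ) fun l : Fin k => (l : ℕ) < r
    simp only [Fin.card_filter_val_lt, not_lt, card_univ, Fintype.card_fin] at hsplit hdim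
    omega
  calc ∑ l : Fin k with r ≤ l.val, d l ^ 2
      ≤ ∑ l : Fin k, d l ^ 2 * ∑ j, v j l ^ 2 := by
        refine sum_le_sum_mul_of_threshold _ (sq_nonneg (d r)) (fun l hl => ?_) (fun l hl => ?_)
          (fun l => sum_nonneg fun j _ => sq_nonneg _) hv.sum_sq_apply_le_one ?_
        · exact pow_le_pow_left₀ (hd0 l) (hd (mem_filter.mp hl).2) 2
        · exact pow_le_pow_left₀ (hd0 r) (hd (by simpa using hl : (l : ℕ) < r).le) 2
        · rw [hv.sum_sum_sq_apply]
          exact_mod_cast hcard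
    _ = ∑ j, ∑ i, (rectDiag n k d *ᵥ v j) i ^ 2 := by
        simp only [sum_sq_rectDiag_mulVec hdn, mul_sum]
        exact sum_comm
    _ = ∑ j, ∑ i, ((rectDiag n k d - C) *ᵥ v j) i ^ 2 := by
        simp only [sub_mulVec, hCv, sub_zero]
    _ ≤ frobSq (rectDiag n k d - C) := sum_sum_sq_mulVec_le_frobSq _ hv

end RectDiag

theorem eckart_young_frobenius_general {n k : ℕ}
    (A D D' : Matrix (Fin n) (Fin k) ℝ)
    (W : Matrix (Fin n) (Fin n) ℝ) (V : Matrix (Fin k) (Fin k) ℝ)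
    (d : ℕ → ℝ) (r' : ℕ)
    (hW : Wᵀ * W = 1) (hV : Vᵀ * V = 1)
    (hD : ∀ (i : Fin n) (j : Fin k), D i j = if (i : ℕ) = (j : ℕ) then d i else 0)
    (hmono : ∀ i j : ℕ, i ≤ j → d j ≤ d i)
    (hzero : ∀ i : ℕ, A.rank ≤ i → d i = 0)
    (hA : A = W * D * Vᵀ)
    (hD' : ∀ (i : Fin n) (j : Fin k),
      D' i j = if (i : ℕ) = (j : ℕ) ∧ (i : ℕ) < r' then d i else 0) :
    ∀ B : Matrix (Fin n) (Fin k) ℝ, B.rank ≤ r' →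
      frobSq (A - W * D' * Vᵀ) ≤ frobSq (A - B) := by
  intro B hB
  have hd0 : ∀ i, 0 ≤ d i := fun i =>
    (hzero _ (le_max_right i A.rank)).symm.le.trans (hmono _ _ (le_max_left i A.rank))
  have hdn : ∀ i, n ≤ i → d i = 0 := fun i hi => hzero i (A.rank_le_height.trans hi)
  have hDdiag : D = rectDiag n k d := by ext i j; simp [hD, rectDiag]
  have hD'diag : D' = rectDiag n k fun i => if i < r' then d i else 0 := by
    ext i j; simp [hD', rectDiag, ite_and]
  have hconj : W * (Wᵀ * B * V) * Vᵀ = B := by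
    simp only [← Matrix.mul_assoc, mul_eq_one_comm.mp hW, Matrix.one_mul]
    rw [Matrix.mul_assoc, mul_eq_one_comm.mp hV, Matrix.mul_one]
  have hrank : (Wᵀ * B * V).rank ≤ r' :=
    ((rank_mul_le_left _ _).trans (rank_mul_le_right _ _)).trans hB
  calc frobSq (A - W * D' * Vᵀ) = frobSq (D - D') := by
        rw [hA, ← Matrix.sub_mul, ← Matrix.mul_sub, frobSq_mul_mul_transpose hW hV]
    _ = ∑ l : Fin k with r' ≤ l.val, d l ^ 2 := by
        rw [hDdiag, hD'diag, frobSq_rectDiag_sub_truncate hdn]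
    _ ≤ frobSq (D - Wᵀ * B * V) := by
        rw [hDdiag]
        exact sum_tail_sq_le_frobSq_rectDiag_sub hmono hd0 hdn hrank
    _ = frobSq (A - B) := by
        rw [← frobSq_mul_mul_transpose hW hV, Matrix.mul_sub, Matrix.sub_mul, hconj, hA]

/-- Eckart–Young theorem (Frobenius norm version): if A = W D V⁻¹ is an SVD of an n×k
real matrix of rank r, with singular values d₁ ≥ d₂ ≥ ⋯ ≥ d_r > 0 (and dᵢ = 0 for i ≥ r),
and r' < r, then truncating to the first r' singular values gives the best Frobenius-norm
approximation of rank ≤ r': ‖A - W D' V⁻¹‖ ≤ ‖A - B‖ for every n×k matrix B of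
rank at most r'. -/
theorem eckart_young_frobenius {n k : ℕ}
    (A D D' : Matrix (Fin n) (Fin k) ℝ)
    (W : Matrix (Fin n) (Fin n) ℝ) (V : Matrix (Fin k) (Fin k) ℝ)
    (d : ℕ → ℝ) (r' : ℕ)
    (hW : Wᵀ * W = 1) (hV : Vᵀ * V = 1)
    (hD : ∀ (i : Fin n) (j : Fin k), D i j = if (i : ℕ) = (j : ℕ) then d i else 0)
    (hmono : ∀ i j : ℕ, i ≤ j → d j ≤ d i)
    (hpos : ∀ i : ℕ, i < A.rank → 0 < d i)
    (hzero : ∀ i : ℕ, A.rank ≤ i → d i = 0)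
    (hA : A = W * D * Vᵀ)
    (hr' : r' < A.rank)
    (hD' : ∀ (i : Fin n) (j : Fin k),
      D' i j = if (i : ℕ) = (j : ℕ) ∧ (i : ℕ) < r' then d i else 0) :
    ∀ B : Matrix (Fin n) (Fin k) ℝ, B.rank ≤ r' →
      frobSq (A - W * D' * Vᵀ) ≤ frobSq (A - B) :=
  eckart_young_frobenius_general A D D' W V d r' hW hV hD hmono hzero hA hD'
end
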